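/- For all integers i ≥ 0 and j ≥ 0, the number S̃_{i,j+1} of restricted Schröder paths from (i,0) to (0,j+1) equals the coefficient of r^i s^j in the formal power series expansion of 2r / ((1−r)(1−r−s−rs)). In particular S̃_{0,j+1} = 0 and S̃_{i,1} = 2i. -/

import Mathlib

open Finset

namespace Paper20V

/-! ## Vertex-model configurations -/

/-- Raw data of a 20V configuration on the `n × n` grid: occupation of the
horizontal, vertical and diagonal inner edges (indexed zero-based; the raw
position `(a,b)` corresponds to the 1-based grid point `(a+1, b+1)`). -/
abbrev Cfg20 (n : ℕ) := (Fin n × Fin n → Bool) × (Fin n × Fin n → Bool) × (Fin n × Fin n → Bool)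

/-- Read a `Fin n × Fin n`-indexed table at the 1-based position `(x, y)`. -/
def rd {n : ℕ} (f : Fin n × Fin n → Bool) (x y : ℕ) : Bool :=
  if h : x - 1 < n ∧ y - 1 < n then f (⟨x - 1, h.1⟩, ⟨y - 1, h.2⟩) else false

/-- The raw data only uses the genuinely existing inner edges:
horizontal edges exist for `x ≤ n-1`, vertical ones for `y ≤ n-1`,
diagonal ones for `x, y ≤ n-1` (1-based). -/
def Valid20 (n : ℕ) (c : Cfg20 n) : Prop :=
  (∀ p : Fin n × Fin n, (p.1 : ℕ) + 1 = n → c.1 p = false) ∧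
  (∀ p : Fin n × Fin n, (p.2 : ℕ) + 1 = n → c.2.1 p = false) ∧
  (∀ p : Fin n × Fin n, ((p.1 : ℕ) + 1 = n ∨ (p.2 : ℕ) + 1 = n) → c.2.2 p = false)

/-- Occupation of the West in-slot of the 1-based vertex `(x,y)`. -/
def Wocc {n : ℕ} (c : Cfg20 n) (x y : ℕ) : Bool :=
  if x = 1 then true else rd c.1 (x - 1) y

/-- Occupation of the North-West in-slot of `(x,y)`; `bc2 = false` for DWBC1,
`bc2 = true` for DWBC2 (where the NW in-slot of `(1,n)` is unoccupied). -/
def NWocc (bc2 : Bool) {n : ℕ} (c : Cfg20 n) (x y : ℕ) : Bool :=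
  if x = 1 then (if bc2 then decide (y ≠ n) else true)
  else if y = n then false else rd c.2.2 (x - 1) y

/-- Occupation of the North in-slot of `(x,y)`. -/
def Nocc {n : ℕ} (c : Cfg20 n) (x y : ℕ) : Bool :=
  if y = n then false else rd c.2.1 x y

/-- Occupation of the East out-slot of `(x,y)`. -/
def Eocc {n : ℕ} (c : Cfg20 n) (x y : ℕ) : Bool :=
  if x = n then false else rd c.1 x y

/-- Occupation of the South-East out-slot of `(x,y)`; `bc2 = true` for DWBC2
(where the SE out-slot of `(n,1)` is unoccupied). -/
def SEocc (bc2 : Bool) {n : ℕ} (c : Cfg20 n) (x y : ℕ) : Bool :=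
  if y = 1 then (if bc2 then decide (x ≠ n) else true)
  else if x = n then false else rd c.2.2 x (y - 1)

/-- Occupation of the South out-slot of `(x,y)`. -/
def Socc {n : ℕ} (c : Cfg20 n) (x y : ℕ) : Bool :=
  if y = 1 then true else rd c.2.1 x (y - 1)

/-- A 20V configuration with DWBC1 (`bc2 = false`) or DWBC2 (`bc2 = true`):
at every vertex the number of occupied in-slots is the number of occupied
out-slots. -/
def IsCfg20 (bc2 : Bool) (n : ℕ) (c : Cfg20 n) : Prop :=
  Valid20 n c ∧ ∀ x ∈ Icc 1 n, ∀ y ∈ Icc 1 n,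
    (Wocc c x y).toNat + (NWocc bc2 c x y).toNat + (Nocc c x y).toNat =
    (Eocc c x y).toNat + (SEocc bc2 c x y).toNat + (Socc c x y).toNat

/-- Number of occupied inner vertical edges in the last column `x = n`. -/
def vcount20 {n : ℕ} (c : Cfg20 n) : ℕ := ∑ y ∈ Icc 1 (n - 1), (rd c.2.1 n y).toNat

/-- The number of 20V configurations with DWBC1 resp. DWBC2. -/
noncomputable def Z20 (bc2 : Bool) (n : ℕ) : ℕ := Nat.card {c : Cfg20 n // IsCfg20 bc2 n c}

/-- Refined 20V partition function `Σ_C τ^{v(C)}`. -/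
noncomputable def Zhat20 (bc2 : Bool) (n : ℕ) (τ : ℂ) : ℂ :=
  ∑ᶠ c : {c : Cfg20 n // IsCfg20 bc2 n c}, τ ^ vcount20 c.1

/-- Number of 20V configurations with `v(C) = ℓ - 1`. -/
noncomputable def Z20ref (bc2 : Bool) (n ℓ : ℕ) : ℕ :=
  Nat.card {c : Cfg20 n // IsCfg20 bc2 n c ∧ vcount20 c = ℓ - 1}

/-- Raw data of a 6V configuration: horizontal and vertical inner edges. -/
abbrev Cfg6 (n : ℕ) := (Fin n × Fin n → Bool) × (Fin n × Fin n → Bool)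

def Valid6 (n : ℕ) (c : Cfg6 n) : Prop :=
  (∀ p : Fin n × Fin n, (p.1 : ℕ) + 1 = n → c.1 p = false) ∧
  (∀ p : Fin n × Fin n, (p.2 : ℕ) + 1 = n → c.2 p = false)

def W6 {n : ℕ} (c : Cfg6 n) (x y : ℕ) : Bool := if x = 1 then true else rd c.1 (x - 1) y
def N6 {n : ℕ} (c : Cfg6 n) (x y : ℕ) : Bool := if y = n then false else rd c.2 x y
def E6 {n : ℕ} (c : Cfg6 n) (x y : ℕ) : Bool := if x = n then false else rd c.1 x y
def S6 {n : ℕ} (c : Cfg6 n) (x y : ℕ) : Bool := if y = 1 then true else rd c.2 x (y - 1)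

/-- A 6V configuration with domain wall boundary conditions. -/
def Is6V (n : ℕ) (c : Cfg6 n) : Prop :=
  Valid6 n c ∧ ∀ x ∈ Icc 1 n, ∀ y ∈ Icc 1 n,
    (W6 c x y).toNat + (N6 c x y).toNat = (E6 c x y).toNat + (S6 c x y).toNat

/-- Number of vertices whose occupied slots are exactly `{W,E}` or exactly `{N,S}`. -/
def bcount {n : ℕ} (c : Cfg6 n) : ℕ :=
  ∑ x ∈ Icc 1 n, ∑ y ∈ Icc 1 n,
    ((W6 c x y && E6 c x y && !N6 c x y && !S6 c x y) ||
     (N6 c x y && S6 c x y && !W6 c x y && !E6 c x y)).toNat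

/-- Number of occupied inner vertical edges in the last column `x = n`. -/
def vcount6 {n : ℕ} (c : Cfg6 n) : ℕ := ∑ y ∈ Icc 1 (n - 1), (rd c.2 n y).toNat

/-- The 6V-DWBC partition function with weights `(1, √2, 1)`. -/
noncomputable def Z6V (n : ℕ) : ℝ :=
  ∑ᶠ c : {c : Cfg6 n // Is6V n c}, Real.sqrt 2 ^ bcount c.1

/-- The refined 6V-DWBC partition function `Σ_C (√2)^{b(C)} σ^{v(C)}`. -/
noncomputable def Zhat6V (n : ℕ) (σ : ℂ) : ℂ :=
  ∑ᶠ c : {c : Cfg6 n // Is6V n c}, (Real.sqrt 2 : ℂ) ^ bcount c.1 * σ ^ vcount6 c.1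

/-- `Z^{6V}_m`: the `(√2)^{b}`-weighted number of 6V-DWBC configurations with
`v(C) = m - 1`. -/
noncomputable def Z6Vref (n m : ℕ) : ℝ :=
  ∑ᶠ c : {c : Cfg6 n // Is6V n c ∧ vcount6 c = m - 1}, Real.sqrt 2 ^ bcount c.1

/-! ## Schröder paths -/

/-- A single Schröder step: `(-1,0)`, `(0,1)` or `(-1,1)`. -/
def SchStep (p q : ℤ × ℤ) : Prop :=
  q = (p.1 - 1, p.2) ∨ q = (p.1, p.2 + 1) ∨ q = (p.1 - 1, p.2 + 1)

/-- A Schröder path from `(i,0)` to `(0,j)`. -/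
def IsSch (P : List (ℤ × ℤ)) (i j : ℕ) : Prop :=
  P ≠ [] ∧ P.head? = some ((i : ℤ), 0) ∧ P.getLast? = some (0, (j : ℤ)) ∧ P.Chain' SchStep

/-- A restricted Schröder path: the last step is not the up step `(0,1)`. -/
def IsRSch (P : List (ℤ × ℤ)) (i j : ℕ) : Prop :=
  IsSch P i j ∧ ∀ a b : ℤ × ℤ, [a, b] <:+ P → b ≠ (a.1, a.2 + 1)

/-- `S̃_{i,j}`: the number of restricted Schröder paths from `(i,0)` to `(0,j)`. -/
noncomputable def Stilde (i j : ℕ) : ℕ := Nat.card {P : List (ℤ × ℤ) // IsRSch P i j}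

/-- A valid family of pairwise vertex-disjoint restricted Schröder paths indexed
by the finite set `F`: for `k ∈ F` the path `p k` goes from `(k,0)` to `(0,k+1)`,
and for `k ∉ F` we set `p k = []`. -/
def FamValid (F : Finset ℕ) (p : ℕ → List (ℤ × ℤ)) : Prop :=
  (∀ k ∈ F, IsRSch (p k) k (k + 1)) ∧
  (∀ k, k ∉ F → p k = []) ∧
  (∀ k ∈ F, ∀ l ∈ F, k ≠ l → ∀ q ∈ p k, q ∉ p l)

/-- Number of `(-1,0)` steps of `P` taken at height `y = m`. -/
def hStepsAt (m : ℤ) (P : List (ℤ × ℤ)) : ℕ :=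
  (P.zip P.tail).countP fun q => decide (q.2 = (q.1.1 - 1, q.1.2) ∧ q.1.2 = m)

/-- Number of `(-1,1)` steps of `P` arriving at height `y = m`. -/
def dStepsTo (m : ℤ) (P : List (ℤ × ℤ)) : ℕ :=
  (P.zip P.tail).countP fun q => decide (q.2 = (q.1.1 - 1, q.1.2 + 1) ∧ q.2.2 = m)

/-! ## Power series -/

/-- The variable `r` of `ℂ[[r,s]]`. -/
noncomputable def Pr : MvPowerSeries (Fin 2) ℂ := MvPowerSeries.X 0
/-- The variable `s` of `ℂ[[r,s]]`. -/
noncomputable def Ps : MvPowerSeries (Fin 2) ℂ := MvPowerSeries.X 1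
/-- Constants in `ℂ[[r,s]]`. -/
noncomputable def Pc (z : ℂ) : MvPowerSeries (Fin 2) ℂ := MvPowerSeries.C (σ := Fin 2) (R := ℂ) z
/-- The coefficient of `r^a s^b`. -/
noncomputable def cf (a b : ℕ) (F : MvPowerSeries (Fin 2) ℂ) : ℂ :=
  MvPowerSeries.coeff (σ := Fin 2) (R := ℂ) (Finsupp.single 0 a + Finsupp.single 1 b) F

/-- The generating function `1/(1-rs) + 2r/((1-r)(1-r-s-rs))` of `I + M`. -/
noncomputable def Gfun : MvPowerSeries (Fin 2) ℂ :=
  (1 - Pr * Ps)⁻¹ + 2 * Pr * ((1 - Pr) * (1 - Pr - Ps - Pr * Ps))⁻¹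

/-- `1/(1-rs) + 2τr/((1-τr)(1-r-s-rs))`: type-1 last column. -/
noncomputable def Gfun1 (τ : ℂ) : MvPowerSeries (Fin 2) ℂ :=
  (1 - Pr * Ps)⁻¹ + 2 * Pc τ * Pr * ((1 - Pc τ * Pr) * (1 - Pr - Ps - Pr * Ps))⁻¹

/-- `1/(1-rs) + (1+τ)r/((1-τr)(1-r-s-rs))`: type-2 last column. -/
noncomputable def Gfun2 (τ : ℂ) : MvPowerSeries (Fin 2) ℂ :=
  (1 - Pr * Ps)⁻¹ + (1 + Pc τ) * Pr * ((1 - Pc τ * Pr) * (1 - Pr - Ps - Pr * Ps))⁻¹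

end Paper20V

/-!
Splitting off the first step of a restricted Schröder path from `(i+1, 0)` gives
`S̃_{i+1,j+1} = S̃_{i,j+1} + S̃_{i+1,j} + S̃_{i,j}`: after an up or diagonal step the rest is a
translate of a path ending one row lower. Moreover `S̃_{i,0} = 1`, and `S̃_{0,j+1} = 0` because a
path staying in the column `x = 0` consists of up steps only, so its last step would be an up step.

On the other side, `F = 2r/((1-r)(1-r-s-rs))` satisfies `F · (1-r-s-rs) = 2r/(1-r)`, whose
coefficients are `2` at `r^i` (`i ≥ 1`) and `0` elsewhere. Hence the coefficients of `F` obey the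
same recurrence and boundary values as `S̃_{i,j+1}`.
-/

namespace Paper20V

def IsRPath (a b : ℤ × ℤ) (P : List (ℤ × ℤ)) : Prop :=
  P.head? = some a ∧ P.getLast? = some b ∧ P.IsChain SchStep ∧
    ∀ x y : ℤ × ℤ, [x, y] <:+ P → y ≠ (x.1, x.2 + 1)

lemma isRSch_iff_isRPath {P : List (ℤ × ℤ)} {i j : ℕ} :
    IsRSch P i j ↔ IsRPath ((i : ℤ), 0) (0, (j : ℤ)) P := by
  refine ⟨fun ⟨⟨_, h⟩, hr⟩ => ⟨h.1, h.2.1, h.2.2, hr⟩, fun ⟨hh, hl, hc, hr⟩ => ⟨⟨?_, hh, hl, hc⟩, hr⟩⟩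
  rintro rfl
  simp at hh

lemma isRPath_cons_iff {a b c : ℤ × ℤ} {Q : List (ℤ × ℤ)} :
    IsRPath a b (c :: Q) ↔
      c = a ∧ (Q = [] ∧ a = b ∨ ∃ d, SchStep a d ∧ IsRPath d b Q ∧ Q ≠ [(a.1, a.2 + 1)]) := by
  rcases Q with _ | ⟨d, Q⟩
  · simp only [IsRPath, List.head?_cons, List.getLast?_singleton, Option.some.injEq,
      List.isChain_singleton, List.suffix_cons_iff]
    grind
  · simp only [IsRPath, List.head?_cons, Option.some.injEq, List.getLast?_cons_cons,
      List.isChain_cons_cons, List.suffix_cons_iff, List.cons.injEq]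
    grind

lemma IsRPath.head?_eq {a b : ℤ × ℤ} {P : List (ℤ × ℤ)} (h : IsRPath a b P) : P.head? = some a :=
  h.1

lemma IsRPath.fst_le_and_snd_le {a b : ℤ × ℤ} {P : List (ℤ × ℤ)} (h : IsRPath a b P) :
    b.1 ≤ a.1 ∧ a.2 ≤ b.2 := by
  induction P generalizing a with
  | nil => simp [IsRPath] at h
  | cons c Q ih =>
    obtain ⟨-, ⟨-, rfl⟩ | ⟨d, hd, hQ, -⟩⟩ := isRPath_cons_iff.mp h
    · exact ⟨le_rfl, le_rfl⟩
    · have := ih hQ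
      rcases hd with rfl | rfl | rfl <;> dsimp only at this <;> omega

lemma isRPath_self_iff {a : ℤ × ℤ} {P : List (ℤ × ℤ)} : IsRPath a a P ↔ P = [a] := by
  refine ⟨fun h => ?_, by rintro rfl; exact isRPath_cons_iff.mpr ⟨rfl, .inl ⟨rfl, rfl⟩⟩⟩
  rcases P with _ | ⟨c, Q⟩
  · simp [IsRPath] at h
  obtain ⟨rfl, ⟨rfl, -⟩ | ⟨d, hd, hQ, -⟩⟩ := isRPath_cons_iff.mp h
  · rfl
  · have := hQ.fst_le_and_snd_le
    rcases hd with rfl | rfl | rfl <;> dsimp only at this <;> omega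

lemma IsRPath.eq_of_fst_eq {a b : ℤ × ℤ} {P : List (ℤ × ℤ)} (h : IsRPath a b P)
    (hab : a.1 = b.1) : a = b := by
  -- `x` never increases, so only up steps are possible, and the last step may not be one.
  induction P generalizing a with
  | nil => simp [IsRPath] at h
  | cons c Q ih =>
    obtain ⟨-, ⟨-, rfl⟩ | ⟨d, hd, hQ, hQne⟩⟩ := isRPath_cons_iff.mp h
    · rfl
    · have := hQ.fst_le_and_snd_le
      rcases hd with rfl | rfl | rfl
      · dsimp only at this; omega
      · obtain rfl := ih hQ hab
        exact absurd (isRPath_self_iff.mp hQ) hQne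
      · dsimp only at this; omega

lemma SchStep.add {p q : ℤ × ℤ} (h : SchStep p q) (v : ℤ × ℤ) : SchStep (p + v) (q + v) := by
  rcases h with rfl | rfl | rfl <;> simp only [SchStep, Prod.ext_iff, Prod.fst_add, Prod.snd_add] <;>
    grind

lemma IsRPath.map_add {a b : ℤ × ℤ} {P : List (ℤ × ℤ)} (h : IsRPath a b P) (v : ℤ × ℤ) :
    IsRPath (a + v) (b + v) (P.map (· + v)) := by
  obtain ⟨hh, hl, hc, hr⟩ := h
  refine ⟨by simp [hh], by simp [hl], (List.isChain_map _).mpr (hc.imp fun _ _ h => h.add v), ?_⟩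
  intro x y hxy hup
  have hsuf : [x - v, y - v] <:+ P := by simpa [Function.comp_def] using hxy.map (· - v)
  exact hr _ _ hsuf (by simp [hup, Prod.ext_iff, sub_add_eq_add_sub])

-- `encard` rather than `ncard`: the first-step decomposition then holds before finiteness is known.
noncomputable def rpathCount (a b : ℤ × ℤ) : ℕ∞ := {P | IsRPath a b P}.encard

lemma rpathCount_add (a b v : ℤ × ℤ) : rpathCount (a + v) (b + v) = rpathCount a b := by
  have hset : {P | IsRPath (a + v) (b + v) P} = List.map (· + v) '' {P | IsRPath a b P} := by
    refine Set.Subset.antisymm (fun P hP => ⟨P.map (· + -v), ?_, ?_⟩) ?_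
    · simpa using (show IsRPath (a + v) (b + v) P from hP).map_add (-v)
    · simp [Function.comp_def]
    · rintro _ ⟨P, hP, rfl⟩
      exact IsRPath.map_add hP v
  rw [rpathCount, hset, (List.map_injective_iff.mpr (add_left_injective v)).encard_image]
  rfl

lemma rpathCount_eq_zero_of_not_le {a b : ℤ × ℤ} (h : ¬(b.1 ≤ a.1 ∧ a.2 ≤ b.2)) :
    rpathCount a b = 0 := by
  rw [rpathCount, Set.encard_eq_zero, Set.eq_empty_iff_forall_notMem]
  exact fun P hP => h (IsRPath.fst_le_and_snd_le hP)

lemma rpathCount_of_fst_eq {a b : ℤ × ℤ} (h : a.1 = b.1) :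
    rpathCount a b = if a = b then 1 else 0 := by
  split_ifs with hab
  · subst hab
    rw [rpathCount, show {P | IsRPath a a P} = {[a]} from Set.ext fun _ => isRPath_self_iff,
      Set.encard_singleton]
  · rw [rpathCount, Set.encard_eq_zero, Set.eq_empty_iff_forall_notMem]
    exact fun P hP => hab (IsRPath.eq_of_fst_eq hP h)

lemma setOf_isRPath_of_fst_ne {a b : ℤ × ℤ} (h : a.1 ≠ b.1) :
    {P | IsRPath a b P} = List.cons a '' ({Q | IsRPath (a.1 - 1, a.2) b Q} ∪
      {Q | IsRPath (a.1, a.2 + 1) b Q} ∪ {Q | IsRPath (a.1 - 1, a.2 + 1) b Q}) := by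
  ext (_ | ⟨c, Q⟩)
  · simp [IsRPath]
  simp only [Set.mem_ofPred_eq, Set.mem_image, Set.mem_union, List.cons.injEq, isRPath_cons_iff]
  constructor
  · rintro ⟨rfl, ⟨-, rfl⟩ | ⟨d, hd, hQ, -⟩⟩
    · exact absurd rfl h
    · refine ⟨Q, ?_, rfl, rfl⟩
      rcases hd with rfl | rfl | rfl <;> simp only [hQ, or_true, true_or]
  · rintro ⟨Q, hQ, rfl, rfl⟩
    have hne {d : ℤ × ℤ} (hd : IsRPath d b Q) : Q ≠ [(a.1, a.2 + 1)] := by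
      rintro rfl
      have hb : ((a.1, a.2 + 1) : ℤ × ℤ) = b := Option.some.inj hd.2.1
      exact h (by rw [← hb])
    refine ⟨rfl, .inr ?_⟩
    rcases hQ with (hQ | hQ) | hQ <;> exact ⟨_, by simp [SchStep], hQ, hne hQ⟩

lemma rpathCount_of_fst_ne {a b : ℤ × ℤ} (h : a.1 ≠ b.1) :
    rpathCount a b =
      rpathCount (a.1 - 1, a.2) b + rpathCount (a.1, a.2 + 1) b + rpathCount (a.1 - 1, a.2 + 1) b := by
  have hdisj {c d : ℤ × ℤ} (hcd : c ≠ d) : Disjoint {Q | IsRPath c b Q} {Q | IsRPath d b Q} :=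
    Set.disjoint_left.mpr fun Q hc hd => hcd (Option.some.inj (hc.head?_eq.symm.trans hd.head?_eq))
  rw [rpathCount, setOf_isRPath_of_fst_ne h, List.cons_injective.encard_image,
    Set.encard_union_eq, Set.encard_union_eq]
  · rfl
  · exact hdisj (by grind)
  · exact Set.disjoint_union_left.mpr ⟨hdisj (by grind), hdisj (by grind)⟩

lemma rpathCount_zero_left (j : ℕ) : rpathCount (0, 0) (0, (j : ℤ)) = if j = 0 then 1 else 0 := by
  simp [rpathCount_of_fst_eq, Prod.ext_iff, eq_comm]

lemma rpathCount_succ_left (i : ℕ) (y : ℤ) :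
    rpathCount ((i : ℤ) + 1, 0) (0, y) =
      rpathCount (i, 0) (0, y) + rpathCount ((i : ℤ) + 1, 1) (0, y) + rpathCount (i, 1) (0, y) := by
  rw [rpathCount_of_fst_ne (by dsimp only; omega)]
  simp

lemma rpathCount_succ_zero (i : ℕ) : rpathCount ((i : ℤ) + 1, 0) (0, 0) = rpathCount (i, 0) (0, 0) := by
  simp [rpathCount_succ_left, rpathCount_eq_zero_of_not_le]

lemma rpathCount_succ_succ (i : ℕ) (y : ℤ) :
    rpathCount ((i : ℤ) + 1, 0) (0, y + 1) =
      rpathCount (i, 0) (0, y + 1) + rpathCount ((i : ℤ) + 1, 0) (0, y) + rpathCount (i, 0) (0, y) := by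
  have hshift (x : ℤ) : rpathCount (x, 1) (0, y + 1) = rpathCount (x, 0) (0, y) := by
    simpa using rpathCount_add (x, 0) (0, y) (0, 1)
  rw [rpathCount_succ_left, hshift, hshift]

lemma rpathCount_ne_top (i j : ℕ) : rpathCount ((i : ℤ), 0) (0, (j : ℤ)) ≠ ⊤ := by
  induction i generalizing j with
  | zero => rw [Nat.cast_zero, rpathCount_zero_left]; split_ifs <;> simp
  | succ i ih =>
    induction j with
    | zero => simpa [rpathCount_succ_zero] using ih 0
    | succ j ihj =>
      push_cast
      rw [rpathCount_succ_succ]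
      exact WithTop.add_ne_top.mpr ⟨WithTop.add_ne_top.mpr ⟨by exact_mod_cast ih (j + 1), ihj⟩, ih j⟩

lemma cast_stilde (i j : ℕ) : (Stilde i j : ℕ∞) = rpathCount ((i : ℤ), 0) (0, (j : ℤ)) := by
  have hset : {P | IsRSch P i j} = {P | IsRPath ((i : ℤ), 0) (0, (j : ℤ)) P} :=
    Set.ext fun _ => isRSch_iff_isRPath
  have hfin : {P | IsRSch P i j}.Finite := by
    rw [← Set.encard_ne_top_iff, hset]
    exact rpathCount_ne_top i j
  rw [Stilde, show Nat.card {P // IsRSch P i j} = {P | IsRSch P i j}.ncard from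
    Nat.card_coe_set_eq _, hfin.cast_ncard_eq, hset]
  rfl

lemma stilde_zero_left (j : ℕ) : Stilde 0 j = if j = 0 then 1 else 0 := by
  have := cast_stilde 0 j
  rw [Nat.cast_zero, rpathCount_zero_left] at this
  split_ifs at this ⊢ <;> exact_mod_cast this

lemma stilde_succ_zero (i : ℕ) : Stilde (i + 1) 0 = Stilde i 0 := by
  apply Nat.cast_injective (R := ℕ∞)
  push_cast [cast_stilde]
  exact rpathCount_succ_zero i

lemma stilde_succ_succ (i j : ℕ) :
    Stilde (i + 1) (j + 1) = Stilde i (j + 1) + Stilde (i + 1) j + Stilde i j := by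
  apply Nat.cast_injective (R := ℕ∞)
  push_cast [cast_stilde]
  exact rpathCount_succ_succ i j

lemma stilde_zero_right (i : ℕ) : Stilde i 0 = 1 := by
  induction i with
  | zero => simp [stilde_zero_left]
  | succ i ih => rw [stilde_succ_zero, ih]

lemma stilde_one (i : ℕ) : Stilde i 1 = 2 * i := by
  induction i with
  | zero => simp [stilde_zero_left]
  | succ i ih => rw [stilde_succ_succ, ih, stilde_zero_right, stilde_zero_right]; ring

lemma cf_add (a b : ℕ) (F G : MvPowerSeries (Fin 2) ℂ) : cf a b (F + G) = cf a b F + cf a b G :=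
  map_add _ F G

lemma cf_two (a b : ℕ) : cf a b 2 = if a = 0 ∧ b = 0 then 2 else 0 := by
  rw [cf, ← map_ofNat MvPowerSeries.C, MvPowerSeries.coeff_C]
  simp [Finsupp.ext_iff, Fin.forall_fin_two]

lemma cf_Pr_mul_zero (b : ℕ) (G : MvPowerSeries (Fin 2) ℂ) : cf 0 b (Pr * G) = 0 := by
  rw [cf, Pr, MvPowerSeries.X_def, MvPowerSeries.coeff_monomial_mul, if_neg]
  exact fun h => by simpa using h 0

lemma cf_Pr_mul_succ (a b : ℕ) (G : MvPowerSeries (Fin 2) ℂ) : cf (a + 1) b (Pr * G) = cf a b G := by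
  have : Finsupp.single (0 : Fin 2) (a + 1) + Finsupp.single 1 b =
      Finsupp.single 0 1 + (Finsupp.single 0 a + Finsupp.single 1 b) := by
    rw [Finsupp.single_add]; abel
  rw [cf, cf, Pr, MvPowerSeries.X_def, this, MvPowerSeries.coeff_add_monomial_mul, one_mul]

lemma cf_Ps_mul_zero (a : ℕ) (G : MvPowerSeries (Fin 2) ℂ) : cf a 0 (Ps * G) = 0 := by
  rw [cf, Ps, MvPowerSeries.X_def, MvPowerSeries.coeff_monomial_mul, if_neg]
  exact fun h => by simpa using h 1

lemma cf_Ps_mul_succ (a b : ℕ) (G : MvPowerSeries (Fin 2) ℂ) : cf a (b + 1) (Ps * G) = cf a b G := by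
  have : Finsupp.single (0 : Fin 2) a + Finsupp.single 1 (b + 1) =
      Finsupp.single 1 1 + (Finsupp.single 0 a + Finsupp.single 1 b) := by
    rw [Finsupp.single_add]; abel
  rw [cf, cf, Ps, MvPowerSeries.X_def, this, MvPowerSeries.coeff_add_monomial_mul, one_mul]

lemma cf_eq_of_eq_Pr_mul {E : MvPowerSeries (Fin 2) ℂ} (hE : E = Pr * (2 + E)) (a b : ℕ) :
    cf a b E = if a ≠ 0 ∧ b = 0 then 2 else 0 := by
  induction a with
  | zero => rw [hE, cf_Pr_mul_zero]; simp
  | succ a ih =>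
    rw [hE, cf_Pr_mul_succ, cf_add, ih, cf_two]
    clear hE
    split_ifs <;> simp_all

noncomputable def stildeGF : MvPowerSeries (Fin 2) ℂ :=
  2 * Pr * ((1 - Pr) * (1 - Pr - Ps - Pr * Ps))⁻¹

lemma cf_stildeGF_mul (a b : ℕ) :
    cf a b (stildeGF * (1 - Pr - Ps - Pr * Ps)) = if a ≠ 0 ∧ b = 0 then 2 else 0 := by
  have hmul : stildeGF * ((1 - Pr) * (1 - Pr - Ps - Pr * Ps)) = 2 * Pr := by
    rw [stildeGF, mul_assoc, MvPowerSeries.inv_mul_cancel _ (by simp [Pr, Ps]), mul_one]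
  exact cf_eq_of_eq_Pr_mul (by linear_combination hmul) a b

lemma stildeGF_eq : stildeGF = stildeGF * (1 - Pr - Ps - Pr * Ps) +
    Pr * stildeGF + Ps * stildeGF + Pr * (Ps * stildeGF) := by
  ring

lemma cf_stildeGF_zero_left (b : ℕ) : cf 0 b stildeGF = 0 := by
  induction b with
  | zero => rw [stildeGF_eq]; simp [cf_add, cf_stildeGF_mul, cf_Pr_mul_zero, cf_Ps_mul_zero]
  | succ b ih => rw [stildeGF_eq]; simp [cf_add, cf_stildeGF_mul, cf_Pr_mul_zero, cf_Ps_mul_succ, ih]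

lemma cf_stildeGF_succ_zero (a : ℕ) : cf (a + 1) 0 stildeGF = cf a 0 stildeGF + 2 := by
  conv_lhs => rw [stildeGF_eq]
  simp [cf_add, cf_stildeGF_mul, cf_Pr_mul_succ, cf_Ps_mul_zero, add_comm]

lemma cf_stildeGF_succ_succ (a b : ℕ) : cf (a + 1) (b + 1) stildeGF =
    cf a (b + 1) stildeGF + cf (a + 1) b stildeGF + cf a b stildeGF := by
  conv_lhs => rw [stildeGF_eq]
  simp [cf_add, cf_stildeGF_mul, cf_Pr_mul_succ, cf_Ps_mul_succ]

lemma stilde_succ_eq_cf (i j : ℕ) : (Stilde i (j + 1) : ℂ) = cf i j stildeGF := by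
  induction i generalizing j with
  | zero => simp [stilde_zero_left, cf_stildeGF_zero_left]
  | succ i ih =>
    induction j with
    | zero =>
      rw [cf_stildeGF_succ_zero, ← ih, stilde_succ_succ, stilde_zero_right, stilde_zero_right]
      push_cast; ring
    | succ j ihj =>
      rw [stilde_succ_succ, cf_stildeGF_succ_succ, ← ih, ← ihj, ← ih]
      push_cast; ring

/-- `S̃_{i,j+1}` is the coefficient of `r^i s^j` in
`2r/((1-r)(1-r-s-rs))`; in particular `S̃_{0,j+1} = 0` and `S̃_{i,1} = 2i`. -/
theorem Stilde_generating_function (i j : ℕ) :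
    ((Stilde i (j + 1) : ℂ) =
      cf i j (2 * Pr * ((1 - Pr) * (1 - Pr - Ps - Pr * Ps))⁻¹)) ∧
    Stilde 0 (j + 1) = 0 ∧ Stilde i 1 = 2 * i :=
  ⟨stilde_succ_eq_cf i j, by simp [stilde_zero_left], stilde_one i⟩

end Paper20V
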